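/- One step of the Riccati difference recursion preserves positive semidefiniteness: if X_j ⪰ 0 for all j, p is a stochastic vector, S := ∑_j p_j X_j, D*D ≻ 0, R := (D*D + B*SB)^{−1}, and K := −R B* S A, then the matrix C*C + A*SA + A*S B K is positive semidefinite. -/

import Mathlib

open Matrix Finset
open scoped ComplexOrder

private lemma smul_posSemidef {n : ℕ} {M : Matrix (Fin n) (Fin n) ℂ}
    (h : M.PosSemidef) {c : ℝ} (hc : 0 ≤ c) : ((c : ℂ) • M).PosSemidef := by
  refine posSemidef_iff_dotProduct_mulVec.mpr ⟨?_, ?_⟩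
  · show ((c : ℂ) • M)ᴴ = _
    rw [conjTranspose_smul, h.1.eq]
    simp
  · intro x
    have := h.dotProduct_mulVec_nonneg x
    rw [smul_mulVec, dotProduct_smul]
    exact smul_nonneg (Complex.zero_le_real.mpr hc) this

theorem stmt_8 {n nu nz N : ℕ}
    (A : Matrix (Fin n) (Fin n) ℂ) (B : Matrix (Fin n) (Fin nu) ℂ)
    (C : Matrix (Fin nz) (Fin n) ℂ) (D : Matrix (Fin nz) (Fin nu) ℂ)
    (X : Fin N → Matrix (Fin n) (Fin n) ℂ) (hX : ∀ j, (X j).PosSemidef)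
    (p : Fin N → ℝ) (hp : ∀ j, 0 ≤ p j) (hpsum : ∑ j, p j = 1)
    (S : Matrix (Fin n) (Fin n) ℂ) (hS : S = ∑ j, ((p j : ℂ) • X j))
    (hD : (Dᴴ * D).PosDef)
    (R : Matrix (Fin nu) (Fin nu) ℂ) (hR : R = (Dᴴ * D + Bᴴ * S * B)⁻¹)
    (K : Matrix (Fin nu) (Fin n) ℂ) (hK : K = -(R * Bᴴ * S * A)) :
    (Cᴴ * C + Aᴴ * S * A + Aᴴ * S * B * K).PosSemidef := by
  have hSpsd : S.PosSemidef := by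
    rw [hS]
    refine Finset.sum_induction _ _ (fun a b ha hb => ha.add hb) .zero ?_
    exact fun j _ => smul_posSemidef (hX j) (hp j)
  obtain ⟨L, hL⟩ : ∃ L : Matrix (Fin n) (Fin n) ℂ, S = Lᴴ * L := by
    open scoped MatrixOrder in
    exact CStarAlgebra.nonneg_iff_eq_star_mul_self.mp hSpsd.nonneg
  set M : Matrix (Fin nu) (Fin nu) ℂ := Dᴴ * D + Bᴴ * S * B with hM
  have hMpd : M.PosDef := hD.add_posSemidef (hSpsd.conjTranspose_mul_mul_same B)
  haveI : Invertible M := hMpd.isUnit.invertible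
  haveI : Invertible (1 : Matrix (Fin n) (Fin n) ℂ) := invertibleOne
  have h1 : (fromBlocks (1 : Matrix (Fin n) (Fin n) ℂ) (L * B) (L * B)ᴴ M).PosSemidef := by
    rw [Matrix.PosDef.fromBlocks₁₁ _ _ Matrix.PosDef.one]
    have he : M - (L * B)ᴴ * (1 : Matrix (Fin n) (Fin n) ℂ)⁻¹ * (L * B) = Dᴴ * D := by
      rw [inv_one, Matrix.mul_one, conjTranspose_mul, hM, hL]
      simp [Matrix.mul_assoc]
    rw [he]
    exact posSemidef_conjTranspose_mul_self D
  have h2 : ((1 : Matrix (Fin n) (Fin n) ℂ) - (L * B) * M⁻¹ * (L * B)ᴴ).PosSemidef :=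
    (Matrix.PosDef.fromBlocks₂₂ _ _ hMpd).mp h1
  have h3 := h2.conjTranspose_mul_mul_same (L * A)
  have hEq : Cᴴ * C + Aᴴ * S * A + Aᴴ * S * B * K
      = Cᴴ * C + (L * A)ᴴ * ((1 : Matrix (Fin n) (Fin n) ℂ)
          - (L * B) * M⁻¹ * (L * B)ᴴ) * (L * A) := by
    rw [hK, hR, hL]
    simp only [Matrix.mul_sub, Matrix.sub_mul, Matrix.mul_one, conjTranspose_mul,
      Matrix.mul_neg, Matrix.neg_mul, Matrix.add_mul, Matrix.mul_add, Matrix.one_mul, Matrix.mul_assoc, sub_eq_add_neg]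
    rw [add_assoc]
  rw [hEq]
  exact (posSemidef_conjTranspose_mul_self C).add h3
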